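/- Let a, b ∈ ℝ³ with (a₁, a₂) ≠ (b₁, b₂), let c = c_{a,b} and r = r_{a,b}, and let e ∈ ℝ³ with e₃ > 0, e ≠ a, e ≠ b. Then the following are equivalent: (i) for every t ∈ T, min(‖t − a‖, ‖t − b‖) ≤ ‖t − e‖, and there exists t ∈ T with ‖t − e‖ ≤ min(‖t − a‖, ‖t − b‖); (ii) e = (a₁, a₂, −a₃), or e = (b₁, b₂, −b₃), or there exists β ∈ (0, 1) with (e₁, e₂) = β(a₁, a₂) + (1 − β)(b₁, b₂) and ‖e − c‖ = r. (Theorem 1: the barrier of the two-active-pursuer game is the union of the two mirror points and a circular arc of radius r centered at c lying in the vertical plane over the segment joining the pursuers' projections.) -/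

import Mathlib

noncomputable section

/-- The point of `ℝ³` with the given three coordinates. -/
def mk3 (x y z : ℝ) : EuclideanSpace ℝ (Fin 3) :=
  (WithLp.equiv 2 (Fin 3 → ℝ)).symm ![x, y, z]

/-- The projection of a point onto the target plane `T = {z | z₃ = 0}`. -/
def projT (p : EuclideanSpace ℝ (Fin 3)) : EuclideanSpace ℝ (Fin 3) :=
  mk3 (p 0) (p 1) 0

/-!
For `t` in the plane `T`, the gap `‖t - p‖² - ‖t - e‖²` is an affine function of `t`. The barrier
condition says that the gaps for `a` and `b` are never both positive on `T` but are both
nonnegative somewhere, which forces a convex combination `θ • gap_a + (1 - θ) • gap_b` to vanish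
identically on `T`. Its linear part vanishes iff `θ • a + (1 - θ) • b - e ⊥ T`, i.e. the
projection of `e` is `θ ā + (1 - θ) b̄`; its value at the equidistant point `c` vanishes iff
`‖e - c‖ = ‖a - c‖`. The endpoints `θ = 1, 0` give the mirror points, `0 < θ < 1` the arc.
-/

open Set
open scoped RealInnerProductSpace

theorem LinearMap.exists_convexComb_eq_zero_of_forall_le_zero_or_le_zero
    {V : Type*} [AddCommGroup V] [Module ℝ V] (ℓ m : V →ₗ[ℝ] ℝ) {α β : ℝ}
    (hα : 0 ≤ α) (hβ : 0 ≤ β) (h : ∀ v, α + ℓ v ≤ 0 ∨ β + m v ≤ 0) :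
    ∃ θ ∈ Icc (0 : ℝ) 1, θ * α + (1 - θ) * β = 0 ∧ ∀ v, θ * ℓ v + (1 - θ) * m v = 0 := by
  have hnot_pos : ∀ v, 0 < ℓ v → 0 < m v → False := fun v hℓ hm => by
    rcases h v with h' | h' <;> linarith
  have hprod : ∀ v, ℓ v * m v ≤ 0 := by
    intro v
    by_contra! hpos
    rcases pos_and_pos_or_neg_and_neg_of_mul_pos hpos with ⟨hℓ, hm⟩ | ⟨hℓ, hm⟩
    · exact hnot_pos v hℓ hm
    · exact hnot_pos (-v) (by simpa using hℓ) (by simpa using hm)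
  have hvanish : ∀ v, ℓ v = m v → ℓ v = 0 := fun v hv => by
    nlinarith [hprod v, sq_nonneg (ℓ v)]
  by_cases hℓm : ℓ = m
  · subst hℓm
    have hℓ : ∀ v, ℓ v = 0 := fun v => hvanish v rfl
    rcases h 0 with h0 | h0 <;> rw [map_zero, add_zero] at h0
    · exact ⟨1, by norm_num, by linarith, by simp [hℓ]⟩
    · exact ⟨0, by norm_num, by linarith, by simp [hℓ]⟩
  obtain ⟨w₀, hw₀⟩ : ∃ w, ℓ w ≠ m w := by
    by_contra! H
    exact hℓm (LinearMap.ext H)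
  set w := (ℓ w₀ - m w₀)⁻¹ • w₀
  have hw : ℓ w - m w = 1 := by
    simp only [w, map_smul, smul_eq_mul, ← mul_sub]
    exact inv_mul_cancel₀ (sub_ne_zero.mpr hw₀)
  -- `v` minus its component along `w` lies in `ker ℓ ∩ ker m`
  have hsplit : ∀ v, ℓ v = (ℓ v - m v) * ℓ w ∧ m v = (ℓ v - m v) * m w := by
    intro v
    have hker : ℓ (v - (ℓ v - m v) • w) = m (v - (ℓ v - m v) • w) := by
      simp only [map_sub, map_smul, smul_eq_mul]
      linear_combination -(ℓ v - m v) * hw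
    have hℓ := hvanish _ hker
    rw [hℓ] at hker
    simp only [map_sub, map_smul, smul_eq_mul] at hℓ hker
    constructor <;> linarith
  have hwprod := hprod w
  have hθ₀ : 0 ≤ -m w := by nlinarith
  have hθ₁ : 0 ≤ 1 - -m w := by nlinarith
  -- `θ := -m w`, so that `1 - θ = ℓ w` by `hw`
  refine ⟨-m w, ⟨hθ₀, by linarith⟩, ?_, fun v => ?_⟩
  · -- at `(β - α) • w` both affine functions take the value `θ * α + (1 - θ) * β`
    have hθ : 0 ≤ -m w * α + (1 - -m w) * β :=
      add_nonneg (mul_nonneg hθ₀ hα) (mul_nonneg hθ₁ hβ)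
    rcases h ((β - α) • w) with h' | h' <;> simp only [map_smul, smul_eq_mul] at h' <;>
      nlinarith
  · obtain ⟨hℓv, hmv⟩ := hsplit v
    linear_combination (-m w) * hℓv + (1 + m w) * hmv - (ℓ v - m v) * m w * hw

section SqDistDiff

variable {E : Type*} [SeminormedAddCommGroup E]

def sqDistDiff (p e t : E) : ℝ := ‖t - p‖ ^ 2 - ‖t - e‖ ^ 2

theorem sqDistDiff_nonpos_iff {p e t : E} : sqDistDiff p e t ≤ 0 ↔ ‖t - p‖ ≤ ‖t - e‖ := by
  rw [sqDistDiff, sub_nonpos, sq_le_sq₀ (norm_nonneg _) (norm_nonneg _)]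

theorem sqDistDiff_nonneg_iff {p e t : E} : 0 ≤ sqDistDiff p e t ↔ ‖t - e‖ ≤ ‖t - p‖ := by
  rw [sqDistDiff, sub_nonneg, sq_le_sq₀ (norm_nonneg _) (norm_nonneg _)]

end SqDistDiff

section Barrier

variable {E : Type*} [NormedAddCommGroup E] [InnerProductSpace ℝ E]

theorem sqDistDiff_add (p e t v : E) :
    sqDistDiff p e (t + v) = sqDistDiff p e t + 2 * ⟪e - p, v⟫ := by
  simp only [sqDistDiff, add_sub_right_comm t v, norm_add_sq_real, inner_sub_left]
  ring

theorem convexComb_sqDistDiff_add (a b e t v : E) (θ : ℝ) :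
    θ * sqDistDiff a e (t + v) + (1 - θ) * sqDistDiff b e (t + v) =
      θ * sqDistDiff a e t + (1 - θ) * sqDistDiff b e t
        - 2 * ⟪θ • a + (1 - θ) • b - e, v⟫ := by
  simp only [sqDistDiff_add, inner_sub_left, inner_add_left, inner_smul_left, RCLike.conj_to_real]
  ring

def IsBarrierPoint (T : Submodule ℝ E) (a b e : E) : Prop :=
  (∀ t ∈ T, min ‖t - a‖ ‖t - b‖ ≤ ‖t - e‖) ∧ ∃ t ∈ T, ‖t - e‖ ≤ min ‖t - a‖ ‖t - b‖

variable {T : Submodule ℝ E} {a b c e : E}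

theorem forall_convexComb_sqDistDiff_eq_zero_iff (hcT : c ∈ T) (hceq : ‖c - a‖ = ‖c - b‖)
    (θ : ℝ) :
    (∀ t ∈ T, θ * sqDistDiff a e t + (1 - θ) * sqDistDiff b e t = 0) ↔
      θ • a + (1 - θ) • b - e ∈ Tᗮ ∧ ‖e - c‖ = ‖a - c‖ := by
  have hFc : θ * sqDistDiff a e c + (1 - θ) * sqDistDiff b e c = ‖c - a‖ ^ 2 - ‖c - e‖ ^ 2 := by
    rw [sqDistDiff, sqDistDiff, ← hceq]
    ring
  have hradius : ‖c - a‖ ^ 2 - ‖c - e‖ ^ 2 = 0 ↔ ‖e - c‖ = ‖a - c‖ := by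
    rw [sub_eq_zero, sq_eq_sq₀ (norm_nonneg _) (norm_nonneg _), norm_sub_rev c, norm_sub_rev c,
      eq_comm]
  constructor
  · intro hF
    refine ⟨(Submodule.mem_orthogonal' _ _).mpr fun v hv => ?_, hradius.mp (hFc ▸ hF c hcT)⟩
    have h := convexComb_sqDistDiff_add a b e c v θ
    rw [hF c hcT, hF _ (T.add_mem hcT hv)] at h
    linarith
  · rintro ⟨hw, hr⟩ t ht
    have h := convexComb_sqDistDiff_add a b e c (t - c) θ
    rw [add_sub_cancel, hFc, hradius.mpr hr,
      (Submodule.mem_orthogonal' _ _).mp hw _ (T.sub_mem ht hcT)] at h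
    linarith

theorem isBarrierPoint_iff (hcT : c ∈ T) (hceq : ‖c - a‖ = ‖c - b‖) :
    IsBarrierPoint T a b e ↔
      ∃ θ ∈ Icc (0 : ℝ) 1, θ • a + (1 - θ) • b - e ∈ Tᗮ ∧ ‖e - c‖ = ‖a - c‖ := by
  simp only [← forall_convexComb_sqDistDiff_eq_zero_iff hcT hceq]
  constructor
  · rintro ⟨hmin, t₀, ht₀, ht₀e⟩
    rw [le_min_iff, ← sqDistDiff_nonneg_iff, ← sqDistDiff_nonneg_iff] at ht₀e
    have hsplit (v : T) : sqDistDiff a e t₀ + 2 * ⟪e - a, (v : E)⟫ ≤ 0 ∨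
        sqDistDiff b e t₀ + 2 * ⟪e - b, (v : E)⟫ ≤ 0 := by
      simpa only [min_le_iff, ← sqDistDiff_nonpos_iff, sqDistDiff_add]
        using hmin _ (T.add_mem ht₀ v.2)
    obtain ⟨θ, hθ, hconst, hlin⟩ :=
      LinearMap.exists_convexComb_eq_zero_of_forall_le_zero_or_le_zero
        (((2 : ℝ) • innerₗ E (e - a)).comp T.subtype)
        (((2 : ℝ) • innerₗ E (e - b)).comp T.subtype) ht₀e.1 ht₀e.2 hsplit
    refine ⟨θ, hθ, fun t ht => ?_⟩
    have h := hlin ⟨t - t₀, T.sub_mem ht ht₀⟩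
    simp only [LinearMap.comp_apply, LinearMap.smul_apply, innerₗ_apply_apply,
      Submodule.coe_subtype, smul_eq_mul] at h
    rw [← add_sub_cancel t₀ t, sqDistDiff_add, sqDistDiff_add]
    linear_combination hconst + h
  · rintro ⟨θ, ⟨hθ₀, hθ₁⟩, hF⟩
    obtain ⟨-, hr⟩ := (forall_convexComb_sqDistDiff_eq_zero_iff hcT hceq θ).mp hF
    refine ⟨fun t ht => ?_, c, hcT, ?_⟩
    · rw [min_le_iff, ← sqDistDiff_nonpos_iff, ← sqDistDiff_nonpos_iff]
      by_contra! hpos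
      nlinarith [hF t ht, mul_nonneg hθ₀ hpos.1.le, mul_nonneg (sub_nonneg.mpr hθ₁) hpos.2.le]
    · rw [norm_sub_rev c e, hr, norm_sub_rev a c, ← hceq, min_self]

end Barrier

def targetPlane : Submodule ℝ (EuclideanSpace ℝ (Fin 3)) :=
  LinearMap.ker (EuclideanSpace.projₗ 2)

theorem mem_targetPlane_orthogonal {w : EuclideanSpace ℝ (Fin 3)} :
    w ∈ targetPlaneᗮ ↔ w 0 = 0 ∧ w 1 = 0 := by
  rw [Submodule.mem_orthogonal]
  constructor
  · intro h
    have h0 := h (EuclideanSpace.single 0 1) (by simp [targetPlane])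
    have h1 := h (EuclideanSpace.single 1 1) (by simp [targetPlane])
    simp only [EuclideanSpace.inner_single_left, map_one, one_mul] at h0 h1
    exact ⟨h0, h1⟩
  · rintro ⟨h0, h1⟩ u (hu : u 2 = 0)
    simp [PiLp.inner_apply, Fin.sum_univ_three, h0, h1, hu]

theorem EuclideanSpace.norm_sq_eq_fin_three (x : EuclideanSpace ℝ (Fin 3)) :
    ‖x‖ ^ 2 = x 0 ^ 2 + x 1 ^ 2 + x 2 ^ 2 := by
  rw [EuclideanSpace.real_norm_sq_eq, Fin.sum_univ_three]

theorem norm_sub_eq_norm_sub_iff_eq_neg {a c e : EuclideanSpace ℝ (Fin 3)} (hcT : c 2 = 0)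
    (h0 : e 0 = a 0) (h1 : e 1 = a 1) (hea : e ≠ a) : ‖e - c‖ = ‖a - c‖ ↔ e 2 = -a 2 := by
  rw [← sq_eq_sq₀ (norm_nonneg _) (norm_nonneg _), EuclideanSpace.norm_sq_eq_fin_three,
    EuclideanSpace.norm_sq_eq_fin_three]
  simp only [PiLp.sub_apply, h0, h1, hcT, sub_zero, add_right_inj]
  rw [sq_eq_sq_iff_eq_or_eq_neg, or_iff_right]
  intro h2
  exact hea (by ext i; fin_cases i <;> assumption)

theorem two_pursuer_barrier (a b c e : EuclideanSpace ℝ (Fin 3))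
    (hcT : c 2 = 0)
    (hceq : ‖c - a‖ = ‖c - b‖)
    (hea : e ≠ a) (heb : e ≠ b) :
    ((∀ t : EuclideanSpace ℝ (Fin 3), t 2 = 0 → min ‖t - a‖ ‖t - b‖ ≤ ‖t - e‖) ∧
      (∃ t : EuclideanSpace ℝ (Fin 3), t 2 = 0 ∧ ‖t - e‖ ≤ min ‖t - a‖ ‖t - b‖)) ↔
    ((e 0 = a 0 ∧ e 1 = a 1 ∧ e 2 = -(a 2)) ∨
      (e 0 = b 0 ∧ e 1 = b 1 ∧ e 2 = -(b 2)) ∨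
      (∃ β : ℝ, 0 < β ∧ β < 1 ∧
        e 0 = β * a 0 + (1 - β) * b 0 ∧ e 1 = β * a 1 + (1 - β) * b 1 ∧
        ‖e - c‖ = ‖a - c‖)) := by
  change IsBarrierPoint targetPlane a b e ↔ _
  rw [isBarrierPoint_iff (show c ∈ targetPlane from hcT) hceq]
  simp only [mem_targetPlane_orthogonal, PiLp.sub_apply, PiLp.add_apply, PiLp.smul_apply,
    smul_eq_mul, sub_eq_zero]
  have hbc : ‖e - c‖ = ‖b - c‖ ↔ ‖e - c‖ = ‖a - c‖ := by
    rw [norm_sub_rev b, norm_sub_rev a, hceq]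
  constructor
  · rintro ⟨θ, ⟨hθ₀, hθ₁⟩, ⟨h0, h1⟩, hr⟩
    rcases hθ₀.eq_or_lt with rfl | hθ₀
    · simp only [zero_mul, sub_zero, one_mul, zero_add] at h0 h1
      exact Or.inr (Or.inl ⟨h0.symm, h1.symm,
        (norm_sub_eq_norm_sub_iff_eq_neg hcT h0.symm h1.symm heb).mp (hbc.mpr hr)⟩)
    rcases hθ₁.eq_or_lt with rfl | hθ₁
    · simp only [one_mul, sub_self, zero_mul, add_zero] at h0 h1
      exact Or.inl ⟨h0.symm, h1.symm,
        (norm_sub_eq_norm_sub_iff_eq_neg hcT h0.symm h1.symm hea).mp hr⟩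
    · exact Or.inr (Or.inr ⟨θ, hθ₀, hθ₁, h0.symm, h1.symm, hr⟩)
  · rintro (⟨h0, h1, h2⟩ | ⟨h0, h1, h2⟩ | ⟨θ, hθ₀, hθ₁, h0, h1, hr⟩)
    · exact ⟨1, ⟨zero_le_one, le_rfl⟩, by simp [h0, h1],
        (norm_sub_eq_norm_sub_iff_eq_neg hcT h0 h1 hea).mpr h2⟩
    · exact ⟨0, ⟨le_rfl, zero_le_one⟩, by simp [h0, h1],
        hbc.mp ((norm_sub_eq_norm_sub_iff_eq_neg hcT h0 h1 heb).mpr h2)⟩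
    · exact ⟨θ, ⟨hθ₀.le, hθ₁.le⟩, ⟨h0.symm, h1.symm⟩, hr⟩
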